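/- Suppose for t = 1,…,d the observed demands are noise-free, q_t = U z_t − U V_t Uᵀ p_t, where U ∈ ℝ^{N×d} has orthonormal columns (d ≤ N), each V_t ∈ ℝ^{d×d} is (possibly asymmetric) strictly positive definite (xᵀV_t x > 0 for all x ≠ 0), and the price vectors are p_t = p̃_t + ζ_t where z_t, V_t, p̃_t are fixed deterministic quantities and ζ_1,…,ζ_d are independent random vectors, each uniformly distributed in a Euclidean ball of strictly positive radius in ℝᴺ. Then almost surely span(q_1,…,q_d) equals the column span of U. -/

import Mathlib

/-!
Write `q_t = U y_t` with `y_t = z_t - V_t Uᵀ (p̃_t + ζ_t) ∈ ℝᵈ`. The map `ζ ↦ y_t` is affine and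
onto (`V_t` is invertible and `Uᵀ` has the right inverse `U`), so the preimage of a proper subspace
of `ℝᵈ` is a Lebesgue-null affine subspace, which the uniform law of `ζ_t` does not charge.
Adding independent such vectors one at a time, Fubini shows that `y_1, …, y_d` are almost surely
linearly independent, hence span `ℝᵈ`, and their images under `U` span its column space.
-/

open Matrix MeasureTheory ProbabilityTheory

namespace Stmt6

/-- Reinterpret a plain vector `Fin n → ℝ` as an element of `EuclideanSpace ℝ (Fin n)`,
so that `‖·‖` denotes the Euclidean (ℓ²) norm. -/
def toEuc {n : ℕ} (v : Fin n → ℝ) : EuclideanSpace ℝ (Fin n) := WithLp.toLp 2 v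

/-- The uniform probability measure on the closed Euclidean ball of center `c`
and radius `ρ` in `ℝᴺ`. -/
noncomputable def uniformOnBall {N : ℕ} (c : EuclideanSpace ℝ (Fin N)) (ρ : ℝ) :
    Measure (EuclideanSpace ℝ (Fin N)) :=
  (volume (Metric.closedBall c ρ))⁻¹ • volume.restrict (Metric.closedBall c ρ)

open Module

theorem span_range_ne_top_of_card_lt {K V ι : Type*} [DivisionRing K] [AddCommGroup V]
    [Module K V] [Fintype ι] (v : ι → V) (h : Fintype.card ι < finrank K V) :
    Submodule.span K (Set.range v) ≠ ⊤ := by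
  intro htop
  have := finrank_range_le_card (R := K) v
  rw [Set.finrank, htop, finrank_top] at this
  omega

theorem span_range_comp_eq_range {R M M' ι : Type*} [Semiring R] [AddCommMonoid M]
    [AddCommMonoid M'] [Module R M] [Module R M'] (L : M →ₗ[R] M') {v : ι → M}
    (hv : Submodule.span R (Set.range v) = ⊤) :
    Submodule.span R (Set.range (L ∘ v)) = LinearMap.range L := by
  rw [Set.range_comp, Submodule.span_image, hv, Submodule.map_top]

theorem const_sub_toAffineMap_surjective {R M M' : Type*} [Ring R] [AddCommGroup M]
    [AddCommGroup M'] [Module R M] [Module R M'] (a : M') {L : M →ₗ[R] M'}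
    (hL : Function.Surjective L) : Function.Surjective (AffineMap.const R M a - L.toAffineMap) := by
  intro y
  obtain ⟨x, hx⟩ := hL (a - y)
  exact ⟨x, by simp [hx]⟩

theorem mulVec_surjective_of_forall_dotProduct_mulVec_pos {K n : Type*} [Field K] [Preorder K]
    [Fintype n] [DecidableEq n] {V : Matrix n n K} (hV : ∀ x, x ≠ 0 → 0 < x ⬝ᵥ V *ᵥ x) :
    Function.Surjective V.mulVec := by
  refine mulVec_surjective_iff_isUnit.mpr (mulVec_injective_iff_isUnit.mp fun x y hxy => ?_)
  by_contra hne
  have := hV (x - y) (sub_ne_zero.mpr hne)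
  rw [mulVec_sub, hxy, sub_self, dotProduct_zero] at this
  exact this.false

theorem toEuclideanLin_mul_transpose_surjective {m n : Type*} [Fintype m] [DecidableEq m]
    [Fintype n] [DecidableEq n] {V : Matrix m m ℝ} {U : Matrix n m ℝ}
    (hV : ∀ x, x ≠ 0 → 0 < x ⬝ᵥ V *ᵥ x) (hU : Uᵀ * U = 1) :
    Function.Surjective (toEuclideanLin (V * Uᵀ)) := by
  intro y
  obtain ⟨x, hx⟩ := ((mulVec_surjective_of_forall_dotProduct_mulVec_pos hV).comp
    (mulVec_surjective_iff_exists_right_inverse.mpr ⟨U, hU⟩)) y.ofLp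
  exact ⟨WithLp.toLp 2 x, by
    simp only [toLpLin_apply, ← mulVec_mulVec]
    exact congrArg (WithLp.toLp 2) hx⟩

theorem span_range_toEuclideanLin_of_linearIndependent {N d : ℕ} (U : Matrix (Fin N) (Fin d) ℝ)
    {y : Fin d → EuclideanSpace ℝ (Fin d)} (hy : LinearIndependent ℝ y) :
    Submodule.span ℝ (Set.range fun t => toEuclideanLin U (y t)) =
      Submodule.span ℝ (Set.range fun j : Fin d => toEuc fun i => U i j) := by
  have hcols : (fun j : Fin d => toEuc fun i => U i j)
      = toEuclideanLin U ∘ PiLp.basisFun 2 ℝ (Fin d) := by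
    ext j i
    simp [toEuc, toLpLin_apply]
  rw [hcols, span_range_comp_eq_range _ (PiLp.basisFun 2 ℝ (Fin d)).span_eq]
  exact span_range_comp_eq_range _ (hy.span_eq_top_of_card_eq_finrank' (by simp))

section MeasureTheory

variable {E : Type*} [NormedAddCommGroup E] [NormedSpace ℝ E] [FiniteDimensional ℝ E]
  [MeasurableSpace E] [BorelSpace E]

theorem measurableSet_setOf_linearIndependent {ι : Type*} [Finite ι] :
    MeasurableSet {v : ι → E | LinearIndependent ℝ v} :=
  isOpen_setOfPred_linearIndependent.measurableSet

theorem addHaar_preimage_affineSubspace {F : Type*} [AddCommGroup F] [Module ℝ F]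
    (μ : Measure E) [μ.IsAddHaarMeasure] {f : E →ᵃ[ℝ] F} (hf : Function.Surjective f)
    {s : AffineSubspace ℝ F} (hs : s ≠ ⊤) : μ (f ⁻¹' s) = 0 := by
  refine Measure.addHaar_affineSubspace μ (s.comap f) fun htop => hs ?_
  refine eq_top_iff.mpr fun y _ => ?_
  obtain ⟨x, rfl⟩ := hf y
  exact AffineSubspace.mem_comap.mp (htop ▸ AffineSubspace.mem_top ℝ E x)

theorem addHaar_preimage_submodule {F : Type*} [AddCommGroup F] [Module ℝ F]
    (μ : Measure E) [μ.IsAddHaarMeasure] {f : E →ᵃ[ℝ] F} (hf : Function.Surjective f)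
    {W : Submodule ℝ F} (hW : W ≠ ⊤) : μ (f ⁻¹' W) = 0 :=
  addHaar_preimage_affineSubspace μ hf (s := W.toAffineSubspace) fun h => hW <| by
    simpa only [Submodule.toAffineSubspace_direction, AffineSubspace.direction_top]
      using congrArg AffineSubspace.direction h

theorem ae_linearIndependent_pi :
    ∀ {k : ℕ}, k ≤ finrank ℝ E → ∀ (ν : Fin k → Measure E) [∀ i, SigmaFinite (ν i)],
      (∀ i (W : Submodule ℝ E), W ≠ ⊤ → ν i W = 0) →
      ∀ᵐ v ∂Measure.pi ν, LinearIndependent ℝ v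
  | 0, _, _, _, _ => ae_of_all _ fun _ => linearIndependent_empty_type
  | k + 1, hk, ν, _, hν => by
    let e := (MeasurableEquiv.piFinSuccAbove (fun _ : Fin (k + 1) => E) 0).symm
    have hmeas : MeasurableSet {p | LinearIndependent ℝ (e p)} :=
      e.measurable measurableSet_setOf_linearIndependent
    rw [← (measurePreserving_piFinSuccAbove ν 0).symm.map_eq, e.measurableEmbedding.ae_map_iff,
      Measure.ae_prod_iff_ae_ae hmeas, Measure.ae_ae_comm hmeas]
    filter_upwards [ae_linearIndependent_pi (Nat.le_of_succ_le hk)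
      (fun j => ν (Fin.succ j)) (fun i => hν _)] with v hv
    have hspan := span_range_ne_top_of_card_lt (K := ℝ) v (by simpa using hk)
    filter_upwards [measure_eq_zero_iff_ae_notMem.mp (hν 0 _ hspan)] with x hx
    simp only [e, MeasurableEquiv.piFinSuccAbove_symm_apply, Fin.insertNthEquiv_zero]
    exact linearIndependent_finCons.mpr ⟨hv, hx⟩

theorem ae_linearIndependent_of_iIndepFun {Ω : Type*} [MeasurableSpace Ω] {μ : Measure Ω}
    {k : ℕ} (hk : k ≤ finrank ℝ E) {X : Fin k → Ω → E}
    (hX : ∀ i, Measurable (X i)) (hind : iIndepFun X μ)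
    (hnull : ∀ i (W : Submodule ℝ E), W ≠ ⊤ → μ (X i ⁻¹' W) = 0) :
    ∀ᵐ ω ∂μ, LinearIndependent ℝ fun i => X i ω := by
  have := hind.isProbabilityMeasure
  have := fun i => Measure.isProbabilityMeasure_map (μ := μ) (hX i).aemeasurable
  have hpi := ae_linearIndependent_pi hk (fun i => μ.map (X i)) fun i W hW => by
    rw [Measure.map_apply (hX i) W.closed_of_finiteDimensional.measurableSet]
    exact hnull i W hW
  rw [← hind.map_fun_eq_pi_map fun i => (hX i).aemeasurable] at hpi
  exact ae_of_ae_map (measurable_pi_lambda _ hX).aemeasurable hpi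

end MeasureTheory

theorem uniformOnBall_absolutelyContinuous {N : ℕ} (c : EuclideanSpace ℝ (Fin N)) (ρ : ℝ) :
    uniformOnBall c ρ ≪ volume :=
  (Measure.absolutelyContinuous_of_le Measure.restrict_le_self).smul_left _

theorem stmt_6_general {Ω : Type} [MeasurableSpace Ω] (μ : Measure Ω)
    {N d : ℕ}
    (U : Matrix (Fin N) (Fin d) ℝ) (hU : Uᵀ * U = 1)
    (z : Fin d → EuclideanSpace ℝ (Fin d))
    (V : Fin d → Matrix (Fin d) (Fin d) ℝ)
    (hVpos : ∀ t, ∀ x : Fin d → ℝ, x ≠ 0 → 0 < x ⬝ᵥ (V t).mulVec x)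
    (ptilde : Fin d → EuclideanSpace ℝ (Fin N))
    (c : Fin d → EuclideanSpace ℝ (Fin N)) (ρ : Fin d → ℝ)
    (ζ : Fin d → Ω → EuclideanSpace ℝ (Fin N))
    (hζmeas : ∀ t, Measurable (ζ t))
    (hζindep : iIndepFun ζ μ)
    (hζunif : ∀ t, Measure.map (ζ t) μ = uniformOnBall (c t) (ρ t))
    (q : Fin d → Ω → EuclideanSpace ℝ (Fin N))
    (hq : ∀ t ω, q t ω =
      toEuc (U.mulVec (z t)) -
        toEuc (U.mulVec ((V t).mulVec (Uᵀ.mulVec (ptilde t + ζ t ω))))) :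
    ∀ᵐ ω ∂μ,
      Submodule.span ℝ (Set.range fun t => q t ω) =
        Submodule.span ℝ (Set.range fun j : Fin d => toEuc fun i => U i j) := by
  let B t := toEuclideanLin (V t * Uᵀ)
  let g t : EuclideanSpace ℝ (Fin N) →ᵃ[ℝ] EuclideanSpace ℝ (Fin d) :=
    AffineMap.const ℝ _ (z t - B t (ptilde t)) - (B t).toAffineMap
  have hqU : ∀ t ω, q t ω = toEuclideanLin U (g t (ζ t ω)) := by
    intro t ω
    simp [hq, g, B, toEuc, toLpLin_apply, mulVec_sub, mulVec_add, mulVec_mulVec, sub_sub]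
  have hg (t) : Function.Surjective (g t) :=
    const_sub_toAffineMap_surjective _ (toEuclideanLin_mul_transpose_surjective (hVpos t) hU)
  have hg_meas (t) : Measurable (g t) := (g t).continuous_of_finiteDimensional.measurable
  have hli : ∀ᵐ ω ∂μ, LinearIndependent ℝ fun t => g t (ζ t ω) := by
    refine ae_linearIndependent_of_iIndepFun (by simp) (fun t => (hg_meas t).comp (hζmeas t))
      (hζindep.comp _ hg_meas) fun t W hW => nonpos_iff_eq_zero.mp ?_
    calc μ (ζ t ⁻¹' (g t ⁻¹' W)) ≤ μ.map (ζ t) (g t ⁻¹' W) :=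
          Measure.le_map_apply (hζmeas t).aemeasurable _
      _ = 0 := by
          rw [hζunif t]
          exact uniformOnBall_absolutelyContinuous _ _
            (addHaar_preimage_submodule volume (hg t) hW)
  filter_upwards [hli] with ω hω
  simpa only [hqU] using span_range_toEuclideanLin_of_linearIndependent U hω

/-- **Lemma (noise-free demands reveal the latent span almost surely).**
Suppose for `t = 1,…,d` the noise-free demands are `q_t = U z_t − U V_t Uᵀ p_t`,
where `U ∈ ℝ^{N×d}` has orthonormal columns, each (possibly asymmetric) `V_t` is
strictly positive definite, and `p_t = p̃_t + ζ_t` with `z_t, V_t, p̃_t` fixed and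
`ζ_1,…,ζ_d` independent, each uniformly distributed in some Euclidean ball of
strictly positive radius.  Then almost surely
`span(q_1,…,q_d) = span(columns of U)`. -/
theorem stmt_6 {Ω : Type} [MeasurableSpace Ω] (μ : Measure Ω) [IsProbabilityMeasure μ]
    {N d : ℕ} (hd : 0 < d) (hdN : d ≤ N)
    (U : Matrix (Fin N) (Fin d) ℝ) (hU : Uᵀ * U = 1)
    (z : Fin d → EuclideanSpace ℝ (Fin d))
    (V : Fin d → Matrix (Fin d) (Fin d) ℝ)
    (hVpos : ∀ t, ∀ x : Fin d → ℝ, x ≠ 0 → 0 < x ⬝ᵥ (V t).mulVec x)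
    (ptilde : Fin d → EuclideanSpace ℝ (Fin N))
    (c : Fin d → EuclideanSpace ℝ (Fin N)) (ρ : Fin d → ℝ) (hρ : ∀ t, 0 < ρ t)
    (ζ : Fin d → Ω → EuclideanSpace ℝ (Fin N))
    (hζmeas : ∀ t, Measurable (ζ t))
    (hζindep : iIndepFun ζ μ)
    (hζunif : ∀ t, Measure.map (ζ t) μ = uniformOnBall (c t) (ρ t))
    (q : Fin d → Ω → EuclideanSpace ℝ (Fin N))
    (hq : ∀ t ω, q t ω =
      toEuc (U.mulVec (z t)) -
        toEuc (U.mulVec ((V t).mulVec (Uᵀ.mulVec (ptilde t + ζ t ω))))) :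
    ∀ᵐ ω ∂μ,
      Submodule.span ℝ (Set.range fun t => q t ω) =
        Submodule.span ℝ (Set.range fun j : Fin d => toEuc fun i => U i j) :=
  stmt_6_general μ U hU z V hVpos ptilde c ρ ζ hζmeas hζindep hζunif q hq

end Stmt6
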